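/- arXiv:2207.11607 — 4 statements merged into one kernel-verified Lean document; each statement's English description precedes it below -/
import Mathlib

section
/- In the positive real numbers, for all t₁, t₂, t₃ > 0 one has the tropical-rational consistency: the triple (t₂t₃/(t₁+t₃), t₁+t₃, t₁t₂/(t₁+t₃)) applied twice returns (t₁, t₂, t₃); i.e., the map φ₃(t₁,t₂,t₃) = (t₂t₃/(t₁+t₃), t₁+t₃, t₁t₂/(t₁+t₃)) is an involution on (ℝ_{>0})³. -/
/-- Lusztig's coordinate change map `φ₃`. -/
noncomputable def phi3 : ℝ × ℝ × ℝ → ℝ × ℝ × ℝ :=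
  fun (t₁, t₂, t₃) => (t₂ * t₃ / (t₁ + t₃), t₁ + t₃, t₁ * t₂ / (t₁ + t₃))

theorem phi3_involutive (t₁ t₂ t₃ : ℝ) (h₁ : 0 < t₁) (h₂ : 0 < t₂) (h₃ : 0 < t₃) :
    phi3 (phi3 (t₁, t₂, t₃)) = (t₁, t₂, t₃) := by
  have hs : t₁ + t₃ ≠ 0 := by positivity
  have hd : t₂ * t₃ / (t₁ + t₃) + t₁ * t₂ / (t₁ + t₃) ≠ 0 := by positivity
  simp only [phi3, Prod.mk.injEq]
  refine ⟨?_, ?_, ?_⟩ <;> field_simp <;> ring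
end

section
/- In SL₃(ℂ), define B₁(z) := [[z,-1,0],[1,0,0],[0,0,1]] and B₂(z) := [[1,0,0],[0,z,-1],[0,1,0]]. Then for all z₁, z₂, z₃ ∈ ℂ, B₁(z₁)·B₂(z₂)·B₁(z₃) = B₂(z₃)·B₁(z₁z₃ - z₂)·B₂(z₁). -/
open Matrix

/-- The braid matrix `B₁(z)` in `SL₃(ℂ)`. -/
def B1 (z : ℂ) : Matrix (Fin 3) (Fin 3) ℂ := !![z, -1, 0; 1, 0, 0; 0, 0, 1]

/-- The braid matrix `B₂(z)` in `SL₃(ℂ)`. -/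
def B2 (z : ℂ) : Matrix (Fin 3) (Fin 3) ℂ := !![1, 0, 0; 0, z, -1; 0, 1, 0]

theorem braid_relation_matrices (z₁ z₂ z₃ : ℂ) :
    B1 z₁ * B2 z₂ * B1 z₃ = B2 z₃ * B1 (z₁ * z₃ - z₂) * B2 z₁ := by
  simp only [B1, B2]
  ext i j
  fin_cases i <;> fin_cases j <;>
    simp [Matrix.mul_apply, Fin.sum_univ_succ] <;> ring
end

section
/- In GL₂(ℂ), for all a, c ∈ ℂ* and b, z₁, z₂ ∈ ℂ, the identity [[a, b],[0, c]] · [[z₁, -1],[1, 0]] · [[z₂, -1],[1, 0]] = [[(z₁a + b)/c, -1],[1, 0]] · [[(c/a)·z₂, -1],[1, 0]] · [[a, 0],[0, c]] holds. -/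
open Matrix

theorem upper_triangular_through_braid_matrices (a c : ℂ) (ha : a ≠ 0) (hc : c ≠ 0)
    (b z₁ z₂ : ℂ) :
    (!![a, b; 0, c] : Matrix (Fin 2) (Fin 2) ℂ) * !![z₁, -1; 1, 0] * !![z₂, -1; 1, 0] =
      !![(z₁ * a + b) / c, -1; 1, 0] * !![(c / a) * z₂, -1; 1, 0] * !![a, 0; 0, c] := by
  ext i j
  fin_cases i <;> fin_cases j <;>
    simp [Matrix.mul_apply, Fin.sum_univ_succ] <;> field_simp <;> ring
end

section
/- Define the tropical B₂ Lusztig maps Φ(a,b,c,d) := (b+2c+d-p₂, p₂-p₁, 2p₁-p₂, a+b+c-p₁) and Φ*(a,b,c,d) := (b+c+d-p₁*, 2p₁*-p₂*, p₂*-p₁*, a+2b+c-p₂*), where p₁ = min(a+b, a+d, c+d), p₂ = min(2a+b, 2a+d, 2c+d), p₁* = min(a+b, a+d, c+d) evaluated at the same arguments, and p₂* = min(a+2b, a+2d, c+2d). Then for all integers a, b, c, d: Φ(a, 2b, c, 2d) = (2a'', b'', 2c'', d'') where (a'', b'', c'', d'') = Φ*(a, b, c, d); equivalently, Φ(a,2b,c,2d)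 equals diag(2,1,2,1)·Φ*(a,b,c,d). -/
/-- `p₁ = min(a+b, a+d, c+d)`. -/
def p1 (a b c d : ℤ) : ℤ := min (a + b) (min (a + d) (c + d))

/-- `p₂ = min(2a+b, 2a+d, 2c+d)`. -/
def p2 (a b c d : ℤ) : ℤ := min (2 * a + b) (min (2 * a + d) (2 * c + d))

/-- `p₂* = min(a+2b, a+2d, c+2d)`. -/
def p2s (a b c d : ℤ) : ℤ := min (a + 2 * b) (min (a + 2 * d) (c + 2 * d))

/-- The tropical B₂ Lusztig map `Φ` (first simple root long). -/
def PhiB2 (a b c d : ℤ) : ℤ × ℤ × ℤ × ℤ :=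
  (b + 2 * c + d - p2 a b c d, p2 a b c d - p1 a b c d,
    2 * p1 a b c d - p2 a b c d, a + b + c - p1 a b c d)

/-- The tropical B₂ Lusztig map `Φ*` (first simple root short). -/
def PhiB2s (a b c d : ℤ) : ℤ × ℤ × ℤ × ℤ :=
  (b + c + d - p1 a b c d, 2 * p1 a b c d - p2s a b c d,
    p2s a b c d - p1 a b c d, a + 2 * b + c - p2s a b c d)

theorem PhiB2_folding (a b c d : ℤ) :
    PhiB2 a (2 * b) c (2 * d) =
      (2 * (PhiB2s a b c d).1, (PhiB2s a b c d).2.1,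
        2 * (PhiB2s a b c d).2.2.1, (PhiB2s a b c d).2.2.2) := by
  simp only [PhiB2, PhiB2s, p1, p2, p2s, Prod.mk.injEq, and_true]
  omega
end
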